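/- Let G be a locally finite game of finite rank with Sprague-Grundy value 𝒢(G) = m ∈ ℕ. Then G is equivalent to *m, the nim heap of size m. -/

import Mathlib

open scoped Classical

universe u

/-- `PosP Γ n` is the set `Pₙ` of positions from which the second player can win
within `n` rounds: `P₀` is the set of terminal positions, and
`Pₙ₊₁ = {x : every option of x has an option in Pₙ}`. -/
def PosP {V : Type*} (Γ : V → Finset V) : ℕ → Set V
  | 0 => {x | Γ x = ∅}
  | n + 1 => {x | ∀ y ∈ Γ x, ∃ z ∈ Γ y, z ∈ PosP Γ n}

/-- `PosN Γ n` is the set `Nₙ`: for `n ≥ 1`, `Nₙ = {x : some option of x lies in Pₙ₋₁}`. -/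
def PosN {V : Type*} (Γ : V → Finset V) : ℕ → Set V
  | 0 => ∅
  | n + 1 => {x | ∃ y ∈ Γ x, y ∈ PosP Γ n}

/-- The P-positions `𝒫 = ⋃ₙ Pₙ` (second player wins). -/
def PPos {V : Type*} (Γ : V → Finset V) : Set V := ⋃ n, PosP Γ n

/-- The N-positions `𝒩 = ⋃ₙ Nₙ` (first player wins). -/
def NPos {V : Type*} (Γ : V → Finset V) : Set V := ⋃ n, PosN Γ n

/-- The D-positions `𝒟 = V ∖ (𝒫 ∪ 𝒩)` (draws). -/
def DPos {V : Type*} (Γ : V → Finset V) : Set V := (PPos Γ ∪ NPos Γ)ᶜ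

/-- The mex (least natural number not attained) of the values `g y`, `y ∈ s`. -/
noncomputable def mexF {V : Type*} (s : Finset V) (g : V → ℕ∞) : ℕ :=
  sInf {n : ℕ | ∀ y ∈ s, g y ≠ (n : ℕ∞)}

/-- The approximants `𝒢ₙ` of the extended Sprague-Grundy function. -/
noncomputable def Gfun {V : Type*} (Γ : V → Finset V) : ℕ → V → ℕ∞
  | 0 => fun x => if Γ x = ∅ then 0 else ⊤
  | n + 1 => fun x =>
      let m := mexF (Γ x) (Gfun Γ n)
      if ∀ y ∈ Γ x, Gfun Γ n y ≤ (m : ℕ∞) ∨ ∃ z ∈ Γ y, Gfun Γ n z = (m : ℕ∞)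
      then (m : ℕ∞) else ⊤

/-- `x` has finite rank with (finite) Sprague-Grundy value `m`:
`𝒢ₙ(x) = m` for all sufficiently large `n`. -/
def HasGVal {V : Type*} (Γ : V → Finset V) (x : V) (m : ℕ) : Prop :=
  ∃ n₀ : ℕ, ∀ n ≥ n₀, Gfun Γ n x = (m : ℕ∞)

/-- `x` has infinite rank: `𝒢ₙ(x) = ∞` for all `n`. -/
def InfiniteRank {V : Type*} (Γ : V → Finset V) (x : V) : Prop :=
  ∀ n : ℕ, Gfun Γ n x = ⊤

/-- The rank of `x`: the least `n` with `𝒢ₙ(x) < ∞`, or `∞` if there is none. -/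
noncomputable def rank {V : Type*} (Γ : V → Finset V) (x : V) : ℕ∞ :=
  sInf ((↑) '' {n : ℕ | Gfun Γ n x ≠ ⊤})

/-- For `x` of infinite rank, the set `𝒜` with `𝒢(x) = ∞(𝒜)`:
the set of finite Sprague-Grundy values of finite-rank options of `x`. -/
def ValSet {V : Type*} (Γ : V → Finset V) (x : V) : Set ℕ :=
  {a | ∃ y ∈ Γ x, HasGVal Γ y a}

/-- The graph of the disjunctive sum: move in exactly one coordinate. -/
noncomputable def sumGraph {V W : Type*} (Γ : V → Finset V) (Δ : W → Finset W) :
    V × W → Finset (V × W) := fun p =>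
  (Γ p.1).image (fun u => (u, p.2)) ∪ (Δ p.2).image (fun w => (p.1, w))

/-- Two (positions of possibly different) games lie in the same outcome class. -/
def SameOutcome {V W : Type*} (Γ : V → Finset V) (x : V) (Δ : W → Finset W) (y : W) : Prop :=
  (x ∈ PPos Γ ↔ y ∈ PPos Δ) ∧ (x ∈ NPos Γ ↔ y ∈ NPos Δ) ∧ (x ∈ DPos Γ ↔ y ∈ DPos Δ)

/-- Equivalence of games: `G + X` and `H + X` have the same outcome for every
locally finite game `X`. -/
def GameEquiv {V W : Type*} (Γ : V → Finset V) (x : V) (Δ : W → Finset W) (y : W) : Prop :=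
  ∀ (X : Type u) (Ξ : X → Finset X) (z : X),
    SameOutcome (sumGraph Γ Ξ) (x, z) (sumGraph Δ Ξ) (y, z)

/-- The nim heap `*m`: positions `0, …, m`, where from `k` one can move to any `j < k`. -/
def nimGraph (m : ℕ) : Fin (m + 1) → Finset (Fin (m + 1)) :=
  fun k => Finset.univ.filter (fun j => j < k)

/-- The reduced graph `R(V)`: the induced graph on the complement of the P-positions. -/
noncomputable def reducedGraph {V : Type*} (Γ : V → Finset V) :
    {x : V // x ∉ PPos Γ} → Finset {x : V // x ∉ PPos Γ} := fun x =>
  (Γ x.1).subtype (fun y => y ∉ PPos Γ)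

/-- The vertex set of `R^{(k)}(V)`: positions which do not have finite rank with
Sprague-Grundy value `< k`. -/
def RkSet {V : Type*} (Γ : V → Finset V) (k : ℕ) : Set V :=
  {x | ¬ ∃ m < k, HasGVal Γ x m}

/-- The induced game graph `R^{(k)}(V)` on `RkSet Γ k`. -/
noncomputable def RkGraph {V : Type*} (Γ : V → Finset V) (k : ℕ) :
    RkSet Γ k → Finset (RkSet Γ k) := fun x =>
  (Γ x.1).subtype (fun y => y ∈ RkSet Γ k)

/-- `V` is `k`-stable: every infinite-rank position `x`, with `𝒢(x) = ∞(𝒜)`,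
has `{0, 1, …, k} ⊆ 𝒜`. -/
def kStable {V : Type*} (Γ : V → Finset V) (k : ℕ) : Prop :=
  ∀ x, InfiniteRank Γ x → ∀ j ≤ k, j ∈ ValSet Γ x

/-- `l` is a directed walk from `o` to `x` in the graph `Γ`. -/
def IsWalk {V : Type*} (Γ : V → Finset V) (o x : V) (l : List V) : Prop :=
  l.head? = some o ∧ l.getLast? = some x ∧ l.Chain' (fun a b => b ∈ Γ a)

/-- `Γ` is a tree with root `o`: `o` has no incoming arcs, and every vertex is
reached from `o` by a unique directed walk. -/
def IsTree {V : Type*} (Γ : V → Finset V) (o : V) : Prop :=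
  (∀ x, o ∉ Γ x) ∧ ∀ x, ∃! l : List V, IsWalk Γ o x l

/-- `f` is a mex labelling: `f x` is the least natural number not attained by `f`
on the options of `x`, for every `x`. -/
def MexLabelling {V : Type*} (Γ : V → Finset V) (f : V → ℕ) : Prop :=
  ∀ x, f x = sInf {n : ℕ | ∀ y ∈ Γ x, f y ≠ n}

/-!
If `𝒢ₙ(x) = k`, then `x` plays like `*k` in every sum `· + X`. A move `*k → *j` is answered by
moving `x` to an option of value `j`, which exists because `k` is a mex; a move of `x` to an
option of value `j < k` is answered like the move `*k → *j`; and every other option of `x` is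
reversible: it has an option of value `k` at the previous level, to which the second player
returns. Every such answer lowers either the stage of the P-position being followed or the
level `n`, so the imitating strategies win in finitely many rounds, in both directions.
-/

section Outcome

variable {V : Type*} {Γ : V → Finset V} {x y : V} {a : ℕ}

lemma posP_mono : Monotone (PosP Γ) := by
  refine monotone_nat_of_le_succ fun n => ?_
  induction n with
  | zero => intro x hx y hy; simp_all [PosP]
  | succ n ih => exact fun x hx y hy => (hx y hy).imp fun z hz => ⟨hz.1, ih hz.2⟩

lemma exists_mem_posP_lt_of_mem_posP (hx : x ∈ PosP Γ a) (hy : y ∈ Γ x) :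
    ∃ z ∈ Γ y, ∃ b < a, z ∈ PosP Γ b := by
  cases a with
  | zero => simp_all [PosP]
  | succ a =>
    obtain ⟨z, hz, hzP⟩ := hx y hy
    exact ⟨z, hz, a, a.lt_succ_self, hzP⟩

lemma mem_pPos_of_forall (h : ∀ y ∈ Γ x, ∃ z ∈ Γ y, z ∈ PPos Γ) : x ∈ PPos Γ := by
  simp only [PPos, Set.mem_iUnion] at h ⊢
  choose! z hz b hb using h
  exact ⟨(Γ x).sup b + 1, fun y hy => ⟨z y, hz y hy, posP_mono (Finset.le_sup hy) (hb y hy)⟩⟩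

lemma mem_nPos_iff : x ∈ NPos Γ ↔ ∃ y ∈ Γ x, y ∈ PPos Γ := by
  simp only [NPos, PPos, Set.mem_iUnion]
  constructor
  · rintro ⟨_ | n, hn⟩
    · exact hn.elim
    · obtain ⟨y, hy, hyP⟩ := hn
      exact ⟨y, hy, n, hyP⟩
  · rintro ⟨y, hy, n, hyP⟩
    exact ⟨n + 1, y, hy, hyP⟩

end Outcome

section Mex

variable {V : Type*} (s : Finset V) (g : V → ℕ∞)

lemma ne_mexF : ∀ y ∈ s, g y ≠ (mexF s g : ℕ∞) := by
  refine Nat.sInf_mem (s := {n : ℕ | ∀ y ∈ s, g y ≠ n}) ?_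
  obtain ⟨n, hn⟩ := Infinite.exists_notMem_finset (s.image fun y => (g y).toNat)
  exact ⟨n, fun y hy hgy => hn (Finset.mem_image.2 ⟨y, hy, by simp [hgy]⟩)⟩

lemma exists_eq_of_lt_mexF {j : ℕ} (hj : j < mexF s g) : ∃ y ∈ s, g y = j := by
  simpa using Nat.notMem_of_lt_sInf hj

end Mex

section Grundy

variable {V : Type*} {Γ : V → Finset V} {x y : V} {n k j : ℕ}

lemma gfun_zero_eq_coe (h : Gfun Γ 0 x = k) : Γ x = ∅ ∧ k = 0 := by
  by_cases hx : Γ x = ∅ <;> simp_all [Gfun, eq_comm]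

lemma gfun_succ_eq_coe (h : Gfun Γ (n + 1) x = k) :
    mexF (Γ x) (Gfun Γ n) = k ∧
      ∀ y ∈ Γ x, Gfun Γ n y ≤ k ∨ ∃ z ∈ Γ y, Gfun Γ n z = k := by
  simp only [Gfun] at h
  split_ifs at h with hc
  · obtain rfl : mexF (Γ x) (Gfun Γ n) = k := by exact_mod_cast h
    exact ⟨rfl, hc⟩
  · exact absurd h (by simp)

lemma exists_gfun_eq_of_lt (h : Gfun Γ n x = k) (hj : j < k) :
    ∃ n', n = n' + 1 ∧ ∃ y ∈ Γ x, Gfun Γ n' y = j := by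
  cases n with
  | zero => exact absurd (gfun_zero_eq_coe h).2 (by omega)
  | succ n =>
    obtain ⟨hmex, -⟩ := gfun_succ_eq_coe h
    exact ⟨n, rfl, exists_eq_of_lt_mexF _ _ (hmex ▸ hj)⟩

lemma gfun_option_lt_or_reversible (h : Gfun Γ n x = k) (hy : y ∈ Γ x) :
    ∃ n', n = n' + 1 ∧
      ((∃ j < k, Gfun Γ n' y = j) ∨ ∃ z ∈ Γ y, Gfun Γ n' z = k) := by
  cases n with
  | zero => simp [(gfun_zero_eq_coe h).1] at hy
  | succ n =>
    obtain ⟨hmex, hopt⟩ := gfun_succ_eq_coe h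
    refine ⟨n, rfl, (hopt y hy).imp_left fun hle => ?_⟩
    have hlt : Gfun Γ n y < k := lt_of_le_of_ne hle (hmex ▸ ne_mexF _ _ y hy)
    obtain ⟨j, hj⟩ := ENat.ne_top_iff_exists.1 hlt.ne_top
    exact ⟨j, by exact_mod_cast hj ▸ hlt, hj.symm⟩

end Grundy

section Sum

variable {V W : Type*} {Γ : V → Finset V} {Δ : W → Finset W} {x u : V} {z w : W}

lemma mem_sumGraph {q : V × W} :
    q ∈ sumGraph Γ Δ (x, z) ↔ (∃ u ∈ Γ x, (u, z) = q) ∨ ∃ w ∈ Δ z, (x, w) = q := by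
  simp [sumGraph]

lemma mk_mem_sumGraph_left (h : u ∈ Γ x) : (u, z) ∈ sumGraph Γ Δ (x, z) :=
  mem_sumGraph.2 (Or.inl ⟨u, h, rfl⟩)

lemma mk_mem_sumGraph_right (h : w ∈ Δ z) : (x, w) ∈ sumGraph Γ Δ (x, z) :=
  mem_sumGraph.2 (Or.inr ⟨w, h, rfl⟩)

end Sum

lemma mem_nimGraph {m : ℕ} {j k : Fin (m + 1)} : j ∈ nimGraph m k ↔ (j : ℕ) < k := by
  simp only [nimGraph, Finset.mem_filter, Finset.mem_univ, true_and, Fin.lt_def]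

section NimEquiv

variable {V X : Type*} {Γ : V → Finset V} {Ξ : X → Finset X} {m : ℕ}

theorem mem_pPos_sumGraph_of_nim {a n : ℕ} {x : V} {k : Fin (m + 1)} {z : X}
    (hx : Gfun Γ n x = (k : ℕ))
    (hk : (k, z) ∈ PosP (sumGraph (nimGraph m) Ξ) a) : (x, z) ∈ PPos (sumGraph Γ Ξ) := by
  refine mem_pPos_of_forall fun q hq => ?_
  rcases mem_sumGraph.1 hq with ⟨y, hy, rfl⟩ | ⟨z', hz', rfl⟩
  · obtain ⟨n, rfl, ⟨j, hjk, hyj⟩ | ⟨w, hw, hwk⟩⟩ := gfun_option_lt_or_reversible hx hy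
    · let j' : Fin (m + 1) := ⟨j, hjk.trans k.isLt⟩
      obtain ⟨r, hr, b, hb, hrP⟩ := exists_mem_posP_lt_of_mem_posP hk
        (mk_mem_sumGraph_left (z := z) (mem_nimGraph.2 hjk : j' ∈ nimGraph m k))
      rcases mem_sumGraph.1 hr with ⟨i, hi, rfl⟩ | ⟨z'', hz'', rfl⟩
      · obtain ⟨n, rfl, y', hy', hy'k⟩ := exists_gfun_eq_of_lt hyj (mem_nimGraph.1 hi)
        exact ⟨_, mk_mem_sumGraph_left hy', mem_pPos_sumGraph_of_nim hy'k hrP⟩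
      · exact ⟨_, mk_mem_sumGraph_right hz'', mem_pPos_sumGraph_of_nim hyj hrP⟩
    · exact ⟨_, mk_mem_sumGraph_left hw, mem_pPos_sumGraph_of_nim hwk hk⟩
  · obtain ⟨r, hr, b, hb, hrP⟩ := exists_mem_posP_lt_of_mem_posP hk (mk_mem_sumGraph_right hz')
    rcases mem_sumGraph.1 hr with ⟨j', hj', rfl⟩ | ⟨z'', hz'', rfl⟩
    · obtain ⟨n, rfl, y', hy', hy'k⟩ := exists_gfun_eq_of_lt hx (mem_nimGraph.1 hj')
      exact ⟨_, mk_mem_sumGraph_left hy', mem_pPos_sumGraph_of_nim hy'k hrP⟩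
    · exact ⟨_, mk_mem_sumGraph_right hz'', mem_pPos_sumGraph_of_nim hx hrP⟩
termination_by (a, n)

theorem mem_nPos_sumGraph_of_nim {n : ℕ} {x : V} {k : Fin (m + 1)} {z : X}
    (hx : Gfun Γ n x = (k : ℕ)) (hk : (k, z) ∈ NPos (sumGraph (nimGraph m) Ξ)) :
    (x, z) ∈ NPos (sumGraph Γ Ξ) := by
  obtain ⟨r, hr, hrP⟩ := mem_nPos_iff.1 hk
  obtain ⟨a, hrP⟩ := Set.mem_iUnion.1 hrP
  rcases mem_sumGraph.1 hr with ⟨j, hj, rfl⟩ | ⟨z', hz', rfl⟩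
  · obtain ⟨n, rfl, y, hy, hyj⟩ := exists_gfun_eq_of_lt hx (mem_nimGraph.1 hj)
    exact mem_nPos_iff.2 ⟨_, mk_mem_sumGraph_left hy, mem_pPos_sumGraph_of_nim hyj hrP⟩
  · exact mem_nPos_iff.2 ⟨_, mk_mem_sumGraph_right hz', mem_pPos_sumGraph_of_nim hx hrP⟩

mutual

theorem nim_mem_pPos_sumGraph {a n : ℕ} {x : V} {k : Fin (m + 1)} {z : X}
    (hx : Gfun Γ n x = (k : ℕ)) (hP : (x, z) ∈ PosP (sumGraph Γ Ξ) a) :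
    (k, z) ∈ PPos (sumGraph (nimGraph m) Ξ) := by
  refine mem_pPos_of_forall fun q hq => mem_nPos_iff.1 ?_
  rcases mem_sumGraph.1 hq with ⟨j, hj, rfl⟩ | ⟨z', hz', rfl⟩
  · obtain ⟨n, rfl, y, hy, hyj⟩ := exists_gfun_eq_of_lt hx (mem_nimGraph.1 hj)
    obtain ⟨r, hr, b, hb, hrP⟩ := exists_mem_posP_lt_of_mem_posP hP (mk_mem_sumGraph_left hy)
    exact nim_mem_nPos_sumGraph hyj hr hrP
  · obtain ⟨r, hr, b, hb, hrP⟩ := exists_mem_posP_lt_of_mem_posP hP (mk_mem_sumGraph_right hz')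
    exact nim_mem_nPos_sumGraph hx hr hrP
termination_by (a, 0)

theorem nim_mem_nPos_sumGraph {b n : ℕ} {x : V} {k : Fin (m + 1)} {z : X} {q : V × X}
    (hx : Gfun Γ n x = (k : ℕ)) (hq : q ∈ sumGraph Γ Ξ (x, z))
    (hP : q ∈ PosP (sumGraph Γ Ξ) b) : (k, z) ∈ NPos (sumGraph (nimGraph m) Ξ) := by
  rcases mem_sumGraph.1 hq with ⟨y, hy, rfl⟩ | ⟨z', hz', rfl⟩
  · obtain ⟨n, rfl, ⟨j, hjk, hyj⟩ | ⟨w, hw, hwk⟩⟩ := gfun_option_lt_or_reversible hx hy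
    · let j' : Fin (m + 1) := ⟨j, hjk.trans k.isLt⟩
      exact mem_nPos_iff.2 ⟨(j', z), mk_mem_sumGraph_left (mem_nimGraph.2 hjk),
        nim_mem_pPos_sumGraph (k := j') hyj hP⟩
    · obtain ⟨r, hr, c, hc, hrP⟩ := exists_mem_posP_lt_of_mem_posP hP (mk_mem_sumGraph_left hw)
      exact nim_mem_nPos_sumGraph hwk hr hrP
  · exact mem_nPos_iff.2 ⟨_, mk_mem_sumGraph_right hz', nim_mem_pPos_sumGraph hx hP⟩
termination_by (b, 1) -- the P-lemma calls this one only at strictly lower stages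

end

theorem sameOutcome_sumGraph_nim {n : ℕ} {x : V} {k : Fin (m + 1)} (z : X)
    (hx : Gfun Γ n x = (k : ℕ)) :
    SameOutcome (sumGraph Γ Ξ) (x, z) (sumGraph (nimGraph m) Ξ) (k, z) := by
  have hP : (x, z) ∈ PPos (sumGraph Γ Ξ) ↔ (k, z) ∈ PPos (sumGraph (nimGraph m) Ξ) := by
    constructor <;> intro h <;> obtain ⟨a, ha⟩ := Set.mem_iUnion.1 h
    exacts [nim_mem_pPos_sumGraph hx ha, mem_pPos_sumGraph_of_nim hx ha]
  have hN : (x, z) ∈ NPos (sumGraph Γ Ξ) ↔ (k, z) ∈ NPos (sumGraph (nimGraph m) Ξ) := by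
    refine ⟨fun h => ?_, mem_nPos_sumGraph_of_nim hx⟩
    obtain ⟨q, hq, hqP⟩ := mem_nPos_iff.1 h
    obtain ⟨a, hqP⟩ := Set.mem_iUnion.1 hqP
    exact nim_mem_nPos_sumGraph hx hq hqP
  exact ⟨hP, hN, by simp only [DPos, Set.mem_compl_iff, Set.mem_union, hP, hN]⟩

end NimEquiv

/-- a locally finite game of finite rank with Sprague-Grundy value
`m` is equivalent to the nim heap `*m`. -/
theorem stmt5 {V : Type*} (Γ : V → Finset V) (x : V) (m : ℕ) (h : HasGVal Γ x m) :
    GameEquiv Γ x (nimGraph m) (Fin.last m) := by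
  obtain ⟨n, hn⟩ := h
  intro X Ξ z
  exact sameOutcome_sumGraph_nim z (by simpa using hn n le_rfl)
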